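/- Let the universal depth-p Hamiltonians on configuration space be H'_i(t) = -(κ+h^∨)^{-1} ∑_{j ≠ i} ∑_{m,l=0}^{p-1} Ω^{(ij)}_{ml} binom(m+l,l) (-1)^m (t_i - t_j)^{-1-m-l} and H''_i(t) = (κ+h^∨)^{-1} ∑_{m,l=0}^{p-1} Ω^{(i∞)}_{m,m+l+1} binom(m+l,l) t_i^l. Then for i, j ∈ J' one has ∂H'_j/∂t_i = ∂H'_i/∂t_j and ∂H''_j/∂t_i = 0 for i ≠ j; hence flatness of the connection d - ∑_i (H'_i + H''_i) dt_i is equivalent to the pairwise commutativity [H_i, H_j] = 0 of the Hamiltonians H_i = H'_i + H''_i. -/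

import Mathlib

set_option synthInstance.maxHeartbeats 1000000
set_option maxHeartbeats 1600000

open scoped TensorProduct
open Finset

attribute [local instance 100] LieRing.ofAssociativeRing

/-- Scalar extension of a complex Lie algebra is a complex Lie algebra. -/
noncomputable instance (priority := low) extendScalarsLieAlgebraOverBase
    {A g : Type*} [CommRing A] [Algebra ℂ A] [LieRing g] [LieAlgebra ℂ g] :
    LieAlgebra ℂ (A ⊗[ℂ] g) :=
  { lie_smul := fun c x y => by
      rw [← algebraMap_smul A c y, lie_smul, algebraMap_smul] }

/-- The ring `ℂ[z]/(z^p)` of truncated polynomials. -/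
noncomputable abbrev TruncPoly (p : ℕ) : Type :=
  Polynomial ℂ ⧸ Ideal.span {(Polynomial.X : Polynomial ℂ) ^ p}

/-- The class of `z^m` in `ℂ[z]/(z^p)`. -/
noncomputable def zpow (p m : ℕ) : TruncPoly p :=
  Ideal.Quotient.mk _ ((Polynomial.X : Polynomial ℂ) ^ m)

/-- The truncated current Lie algebra `g_p = g[z]/z^p g[z]`. -/
noncomputable abbrev TruncCurrent (p : ℕ) (g : Type*) [LieRing g] [LieAlgebra ℂ g] :=
  (TruncPoly p) ⊗[ℂ] g

/-- The enveloping algebra `U(g_p)`. -/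
noncomputable abbrev UEnvp (p : ℕ) (g : Type*) [LieRing g] [LieAlgebra ℂ g] :=
  UniversalEnvelopingAlgebra ℂ (TruncCurrent p g)

/-- The canonical embedding `g_p → U(g_p)`. -/
noncomputable def iotaU (p : ℕ) (g : Type*) [LieRing g] [LieAlgebra ℂ g] :
    TruncCurrent p g →ₗ⁅ℂ⁆ UEnvp p g :=
  UniversalEnvelopingAlgebra.ι ℂ

section

variable (p : ℕ) {g : Type*} [LieRing g] [LieAlgebra ℂ g]
  {ι : Type*} [Fintype ι] (b b' : ι → g)
  {n : ℕ} {A : Type*} [Ring A] [Algebra ℂ A]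
  (emb : Fin (n + 1) → (UEnvp p g →ₐ[ℂ] A))

/-- The quadratic tensor `Ω^{(ij)}_{ml} = ∑ₖ (Xₖ z^m)^{(i)} (Xᵏ z^l)^{(j)}` placed in
slots `i, j` of the tensor power `U(g_p)^{⊗|J|}` (realised by the commuting slot
embeddings `emb`). -/
noncomputable def OmSlot (i j : Fin (n + 1)) (m l : ℕ) : A :=
  ∑ k, emb i (iotaU p g (zpow p m ⊗ₜ b k)) * emb j (iotaU p g (zpow p l ⊗ₜ b' k))

/-- The universal depth-`p` Hamiltonian `H'_i(t)`: the interaction between the finite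
marked points. -/
noncomputable def HamPrime (κ h : ℂ) (i : Fin n) (t : Fin n → ℂ) : A :=
  -(κ + h)⁻¹ • ∑ j ∈ univ.erase i, ∑ m ∈ range p, ∑ l ∈ range p,
    (((-1 : ℂ) ^ m * ((m + l).choose l : ℂ)) * (t i - t j) ^ (-(1 : ℤ) - m - l)) •
      OmSlot p b b' emb i.castSucc j.castSucc m l

/-- The universal depth-`p` Hamiltonian `H''_i(t)`: the interaction with the marked
point at infinity (the last slot). -/
noncomputable def HamInfty (κ h : ℂ) (i : Fin n) (t : Fin n → ℂ) : A :=
  (κ + h)⁻¹ • ∑ m ∈ range p, ∑ l ∈ range p,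
    (((m + l).choose l : ℂ) * t i ^ l) •
      OmSlot p b b' emb i.castSucc (Fin.last n) m (m + l + 1)

/-- The total universal Hamiltonian `H_i = H'_i + H''_i`. -/
noncomputable def HamTot (κ h : ℂ) (i : Fin n) (t : Fin n → ℂ) : A :=
  HamPrime p b b' emb κ h i t + HamInfty p b b' emb κ h i t

end

/-!
The `Ω^{(ji)}_{ml}`-term of `H'_j` is a scalar function `hamCoeff m l (t_j - t_i)` times a
constant tensor. The Casimir tensor `∑ₖ Xₖ ⊗ Xᵏ` is symmetric, so
`Ω^{(ij)}_{lm} = Ω^{(ji)}_{ml}`, and `hamCoeff l m (t_i - t_j) = -hamCoeff m l (t_j - t_i)`;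
differentiating the first in `t_i` and the second in `t_j` gives the same result, whence
`∂ᵢH'ⱼ = ∂ⱼH'ᵢ`. Since `H''_j` depends on `t_j` alone, the curvature `∂ᵢHⱼ - ∂ⱼHᵢ - [Hᵢ, Hⱼ]`
reduces to `-[Hᵢ, Hⱼ]`, and linear functionals separate points.
-/

section DualBasis

variable {K M ι : Type*} [CommRing K] [AddCommGroup M] [Module K M] [Fintype ι] [DecidableEq ι]
  {B : LinearMap.BilinForm K M} (b : Module.Basis ι K M) {b' : ι → M}

/-- Duality says the Gram matrix of `B` in `b` is inverse to the transposed coordinate matrix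
of `b'`, and the inverse of a symmetric matrix is symmetric. -/
theorem basis_repr_dual_symm (hBsymm : ∀ x y : M, B x y = B y x)
    (hdual : ∀ i j, B (b i) (b' j) = if i = j then 1 else 0) (j k : ι) :
    b.repr (b' k) j = b.repr (b' j) k := by
  set G : Matrix ι ι K := Matrix.of fun k j => b.repr (b' k) j
  set Gram : Matrix ι ι K := Matrix.of fun i j => B (b i) (b j)
  have hGram_mul : Gram * G.transpose = 1 := by
    ext i k
    calc ∑ j, B (b i) (b j) * b.repr (b' k) j
        = B (b i) (∑ j, b.repr (b' k) j • b j) := by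
          simp only [map_sum, map_smul, smul_eq_mul, mul_comm]
      _ = (1 : Matrix ι ι K) i k := by rw [b.sum_repr, hdual, Matrix.one_apply]
  have hGram_symm : Gram.transpose = Gram := by
    ext i j; exact hBsymm (b j) (b i)
  have hmul_G : Gram * G = 1 := by
    simpa [hGram_symm] using congrArg Matrix.transpose (mul_eq_one_comm.mp hGram_mul)
  have hG_symm : G.transpose = G := by
    calc G.transpose = G.transpose * (Gram * G) := by rw [hmul_G, Matrix.mul_one]
      _ = G := by rw [← Matrix.mul_assoc, mul_eq_one_comm.mp hGram_mul, Matrix.one_mul]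
  exact congrFun (congrFun hG_symm j) k

theorem sum_basis_dual_swap {N : Type*} [AddCommMonoid N] [Module K N]
    (hBsymm : ∀ x y : M, B x y = B y x)
    (hdual : ∀ i j, B (b i) (b' j) = if i = j then 1 else 0) (F : M →ₗ[K] M →ₗ[K] N) :
    ∑ k, F (b k) (b' k) = ∑ k, F (b' k) (b k) := by
  conv_lhs => enter [2, k]; rw [← b.sum_repr (b' k)]
  conv_rhs => enter [2, k]; rw [← b.sum_repr (b' k)]
  simp only [map_sum, map_smul, LinearMap.sum_apply, LinearMap.smul_apply]
  rw [Finset.sum_comm]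
  exact Finset.sum_congr rfl fun k _ => Finset.sum_congr rfl fun j _ => by
    rw [basis_repr_dual_symm b hBsymm hdual]

end DualBasis

theorem omSlot_swap {g : Type*} [LieRing g] [LieAlgebra ℂ g] {ι : Type*} [Fintype ι]
    [DecidableEq ι] {B : LinearMap.BilinForm ℂ g} (hBsymm : ∀ x y : g, B x y = B y x)
    (b : Module.Basis ι ℂ g) {b' : ι → g}
    (hdual : ∀ i j, B (b i) (b' j) = if i = j then 1 else 0)
    (p : ℕ) {n : ℕ} {A : Type*} [Ring A] [Algebra ℂ A]
    {emb : Fin (n + 1) → (UEnvp p g →ₐ[ℂ] A)} {i j : Fin (n + 1)}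
    (hcomm : ∀ u v : UEnvp p g, emb i u * emb j v = emb j v * emb i u) (m l : ℕ) :
    OmSlot p b b' emb j i l m = OmSlot p b b' emb i j m l := by
  let slot (a : Fin (n + 1)) (q : ℕ) : g →ₗ[ℂ] A :=
    (emb a).toLinearMap ∘ₗ (iotaU p g).toLinearMap ∘ₗ TensorProduct.mk ℂ _ g (zpow p q)
  calc OmSlot p b b' emb j i l m
      = ∑ k, (LinearMap.mul ℂ A).compl₁₂ (slot i m) (slot j l) (b' k) (b k) :=
        Finset.sum_congr rfl fun k _ => (hcomm _ _).symm
    _ = OmSlot p b b' emb i j m l := (sum_basis_dual_swap b hBsymm hdual _).symm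

/-- The coefficient of `Ω^{(ij)}_{ml}` in `H'_i`, as a function of `t_i - t_j`. -/
noncomputable def hamCoeff (m l : ℕ) (x : ℂ) : ℂ :=
  ((-1 : ℂ) ^ m * ((m + l).choose l : ℂ)) * x ^ (-(1 : ℤ) - m - l)

theorem hamCoeff_neg (m l : ℕ) (x : ℂ) : hamCoeff m l (-x) = -hamCoeff l m x := by
  have hsign : (-x) ^ (-(1 : ℤ) - m - l) = (-1) ^ (m + l + 1) * x ^ (-(1 : ℤ) - m - l) := by
    rw [neg_eq_neg_one_mul, mul_zpow,
      show -(1 : ℤ) - m - l = -((m + l + 1 : ℕ) : ℤ) by push_cast; ring, zpow_neg, zpow_natCast, ← inv_pow, inv_neg_one]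
  have hsq : (-1 : ℂ) ^ m * (-1) ^ m = 1 := by rw [← mul_pow]; norm_num
  rw [hamCoeff, hamCoeff, hsign, add_comm l m, Nat.choose_symm_add,
    show -(1 : ℤ) - l - m = -1 - m - l by ring]
  linear_combination (-(((m + l).choose l : ℂ) * x ^ (-(1 : ℤ) - m - l) * (-1) ^ l)) * hsq

theorem deriv_hamCoeff_neg (m l : ℕ) (x : ℂ) :
    deriv (hamCoeff m l) (-x) = deriv (hamCoeff l m) x := by
  have h := deriv_comp_neg (hamCoeff m l) x
  simp only [hamCoeff_neg, deriv.fun_neg] at h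
  exact neg_injective h.symm

theorem differentiableAt_hamCoeff (m l : ℕ) {x : ℂ} (hx : x ≠ 0) :
    DifferentiableAt ℂ (hamCoeff m l) x :=
  ((differentiableAt_zpow).mpr (Or.inl hx)).const_mul _

theorem hasDerivAt_sum_update {ι 𝕜 F : Type*} [DecidableEq ι] [NontriviallyNormedField 𝕜]
    [NormedAddCommGroup F] [NormedSpace 𝕜 F] {s : Finset ι} {i : ι} (hi : i ∈ s)
    (f : ι → 𝕜 → F) (t : ι → 𝕜) {f' : F} (hf : HasDerivAt (f i) f' (t i)) :
    HasDerivAt (fun x => ∑ k ∈ s, f k (Function.update t i x k)) f' (t i) := by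
  have hsplit : (fun x => ∑ k ∈ s, f k (Function.update t i x k))
      = fun x => f i x + ∑ k ∈ s.erase i, f k (t k) := by
    funext x
    rw [← Finset.add_sum_erase s _ hi, Function.update_self]
    congr 1
    exact Finset.sum_congr rfl fun k hk => by rw [Function.update_of_ne (Finset.ne_of_mem_erase hk)]
  rw [hsplit]
  exact hf.add_const _

section Hamiltonians

variable (p : ℕ) {g : Type*} [LieRing g] [LieAlgebra ℂ g] {ι : Type*} [Fintype ι]
  {n : ℕ} {A : Type*} [Ring A] [Algebra ℂ A] (emb : Fin (n + 1) → (UEnvp p g →ₐ[ℂ] A))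
  (κ h : ℂ) {i j : Fin n} {t : Fin n → ℂ}

theorem hasDerivAt_hamPrime_update (b b' : ι → g) (hij : i ≠ j) (ht : t i ≠ t j)
    (ψ : A →ₗ[ℂ] ℂ) :
    HasDerivAt (fun s => ψ (HamPrime p b b' emb κ h j (Function.update t i s)))
      ((κ + h)⁻¹ * ∑ m ∈ range p, ∑ l ∈ range p,
        deriv (hamCoeff m l) (t j - t i) * ψ (OmSlot p b b' emb j.castSucc i.castSucc m l))
      (t i) := by
  set term : Fin n → ℂ → ℂ := fun k y => ∑ m ∈ range p, ∑ l ∈ range p,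
    hamCoeff m l (t j - y) * ψ (OmSlot p b b' emb j.castSucc k.castSucc m l)
  have hform : (fun s => ψ (HamPrime p b b' emb κ h j (Function.update t i s)))
      = fun s => -(κ + h)⁻¹ * ∑ k ∈ univ.erase j, term k (Function.update t i s k) := by
    funext s
    simp only [term, HamPrime, hamCoeff, map_smul, map_sum, smul_eq_mul,
      Function.update_of_ne hij.symm]
  have hterm : HasDerivAt (term i) (∑ m ∈ range p, ∑ l ∈ range p,
      -deriv (hamCoeff m l) (t j - t i) * ψ (OmSlot p b b' emb j.castSucc i.castSucc m l))
      (t i) :=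
    HasDerivAt.fun_sum fun m _ => HasDerivAt.fun_sum fun l _ =>
      ((differentiableAt_hamCoeff m l (sub_ne_zero.mpr ht.symm)).hasDerivAt.comp_const_sub
        (t j) (t i)).mul_const _
  rw [hform]
  refine ((hasDerivAt_sum_update (mem_erase.mpr ⟨hij, mem_univ i⟩) term t hterm).const_mul
    (-(κ + h)⁻¹)).congr_deriv ?_
  simp only [neg_mul, Finset.sum_neg_distrib, mul_neg, neg_neg]

theorem deriv_hamPrime_update_comm {B : LinearMap.BilinForm ℂ g}
    (hBsymm : ∀ x y : g, B x y = B y x) [DecidableEq ι] (b : Module.Basis ι ℂ g) {b' : ι → g}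
    (hdual : ∀ i j, B (b i) (b' j) = if i = j then 1 else 0)
    (hcomm : ∀ u v, emb i.castSucc u * emb j.castSucc v = emb j.castSucc v * emb i.castSucc u)
    (hij : i ≠ j) (ht : t i ≠ t j) (ψ : A →ₗ[ℂ] ℂ) :
    deriv (fun s => ψ (HamPrime p b b' emb κ h j (Function.update t i s))) (t i)
      = deriv (fun s => ψ (HamPrime p b b' emb κ h i (Function.update t j s))) (t j) := by
  rw [(hasDerivAt_hamPrime_update p emb κ h b b' hij ht ψ).deriv,
    (hasDerivAt_hamPrime_update p emb κ h b b' hij.symm ht.symm ψ).deriv, Finset.sum_comm]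
  congr 1
  refine Finset.sum_congr rfl fun l _ => Finset.sum_congr rfl fun m _ => ?_
  rw [omSlot_swap hBsymm b hdual p hcomm, ← neg_sub, deriv_hamCoeff_neg]

theorem hamInfty_update_of_ne (b b' : ι → g) (hij : i ≠ j) (s : ℂ) :
    HamInfty p b b' emb κ h j (Function.update t i s) = HamInfty p b b' emb κ h j t := by
  simp only [HamInfty, Function.update_of_ne hij.symm]

theorem deriv_hamTot_update_of_ne (b b' : ι → g) (hij : i ≠ j) (ψ : A →ₗ[ℂ] ℂ) (x : ℂ) :
    deriv (fun s => ψ (HamTot p b b' emb κ h j (Function.update t i s))) x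
      = deriv (fun s => ψ (HamPrime p b b' emb κ h j (Function.update t i s))) x := by
  simp only [HamTot, map_add, hamInfty_update_of_ne p emb κ h b b' hij]
  exact deriv_add_const _

theorem deriv_hamTot_update_comm {B : LinearMap.BilinForm ℂ g}
    (hBsymm : ∀ x y : g, B x y = B y x) [DecidableEq ι] (b : Module.Basis ι ℂ g) {b' : ι → g}
    (hdual : ∀ i j, B (b i) (b' j) = if i = j then 1 else 0)
    (hcomm : ∀ u v, emb i.castSucc u * emb j.castSucc v = emb j.castSucc v * emb i.castSucc u)
    (hij : i ≠ j) (ht : t i ≠ t j) (ψ : A →ₗ[ℂ] ℂ) :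
    deriv (fun s => ψ (HamTot p b b' emb κ h j (Function.update t i s))) (t i)
      = deriv (fun s => ψ (HamTot p b b' emb κ h i (Function.update t j s))) (t j) := by
  rw [deriv_hamTot_update_of_ne p emb κ h b b' hij,
    deriv_hamTot_update_of_ne p emb κ h b b' hij.symm,
    deriv_hamPrime_update_comm p emb κ h hBsymm b hdual hcomm hij ht]

end Hamiltonians

theorem universal_hamiltonians_flatness_iff_commutativity_general
    {g : Type*} [LieRing g] [LieAlgebra ℂ g]
    (B : LinearMap.BilinForm ℂ g)
    (hBsymm : ∀ x y : g, B x y = B y x)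
    {ι : Type*} [Fintype ι] [DecidableEq ι] (b : Module.Basis ι ℂ g) (b' : ι → g)
    (hdual : ∀ i j, B (b i) (b' j) = if i = j then 1 else 0)
    (p : ℕ) (κ h : ℂ)
    {n : ℕ} {A : Type*} [Ring A] [Algebra ℂ A]
    (emb : Fin (n + 1) → (UEnvp p g →ₐ[ℂ] A))
    (hcomm : ∀ i j : Fin (n + 1), i ≠ j → ∀ u v : UEnvp p g,
      emb i u * emb j v = emb j v * emb i u) :
    (∀ t : Fin n → ℂ, Function.Injective t → ∀ i j : Fin n, i ≠ j →
      ∀ ψ : A →ₗ[ℂ] ℂ,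
        deriv (fun s => ψ (HamPrime p (⇑b) b' emb κ h j (Function.update t i s))) (t i)
          = deriv (fun s => ψ (HamPrime p (⇑b) b' emb κ h i (Function.update t j s)))
              (t j)) ∧
    (∀ t : Fin n → ℂ, Function.Injective t → ∀ i j : Fin n, i ≠ j →
      ∀ ψ : A →ₗ[ℂ] ℂ,
        deriv (fun s => ψ (HamInfty p (⇑b) b' emb κ h j (Function.update t i s))) (t i)
          = 0) ∧
    ((∀ t : Fin n → ℂ, Function.Injective t → ∀ i j : Fin n, i ≠ j →
        ∀ ψ : A →ₗ[ℂ] ℂ,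
          deriv (fun s => ψ (HamTot p (⇑b) b' emb κ h j (Function.update t i s))) (t i)
            - deriv (fun s => ψ (HamTot p (⇑b) b' emb κ h i (Function.update t j s)))
                (t j)
            - ψ (HamTot p (⇑b) b' emb κ h i t * HamTot p (⇑b) b' emb κ h j t
                - HamTot p (⇑b) b' emb κ h j t * HamTot p (⇑b) b' emb κ h i t) = 0)
      ↔ (∀ t : Fin n → ℂ, Function.Injective t → ∀ i j : Fin n,
          HamTot p (⇑b) b' emb κ h i t * HamTot p (⇑b) b' emb κ h j t
            = HamTot p (⇑b) b' emb κ h j t * HamTot p (⇑b) b' emb κ h i t)) := by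
  have hslots : ∀ i j : Fin n, i ≠ j → ∀ u v,
      emb i.castSucc u * emb j.castSucc v = emb j.castSucc v * emb i.castSucc u :=
    fun i j hij => hcomm _ _ ((Fin.castSucc_injective n).ne hij)
  have hTot := fun t (ht : Function.Injective t) i j (hij : i ≠ j) =>
    deriv_hamTot_update_comm p emb κ h hBsymm b hdual (hslots i j hij) hij (ht.ne hij)
  refine ⟨fun t ht i j hij => deriv_hamPrime_update_comm p emb κ h hBsymm b hdual
      (hslots i j hij) hij (ht.ne hij), fun t _ i j hij ψ => ?_,
    ⟨fun hflat t ht i j => ?_, fun hc t ht i j hij ψ => ?_⟩⟩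
  · simp only [hamInfty_update_of_ne p emb κ h b b' hij, deriv_const]
  · rcases eq_or_ne i j with rfl | hij
    · rfl
    refine sub_eq_zero.mp ((Module.forall_dual_apply_eq_zero_iff ℂ _).mp fun ψ => ?_)
    simpa only [hTot t ht i j hij ψ, sub_self, zero_sub, neg_eq_zero] using hflat t ht i j hij ψ
  · rw [hTot t ht i j hij ψ, hc t ht i j, sub_self, sub_self, map_zero, sub_zero]

/-- For the universal depth-`p` Hamiltonians `H'ᵢ, H''ᵢ` on configuration space one has
`∂H'ⱼ/∂tᵢ = ∂H'ᵢ/∂tⱼ` and `∂H''ⱼ/∂tᵢ = 0` for `i ≠ j`; hence flatness of the universal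
connection `∇_p = d - ∑ᵢ (H'ᵢ + H''ᵢ) dtᵢ` is equivalent to pairwise commutativity
`[Hᵢ, Hⱼ] = 0` of the Hamiltonians `Hᵢ = H'ᵢ + H''ᵢ`.  (Partial derivatives of the
`U(g_p)^{⊗|J|}`-valued functions are expressed through arbitrary linear functionals
`ψ`, which separate points.) -/
theorem universal_hamiltonians_flatness_iff_commutativity
    {g : Type*} [LieRing g] [LieAlgebra ℂ g] [Module.Finite ℂ g]
    [LieAlgebra.IsSimple ℂ g]
    (B : LinearMap.BilinForm ℂ g) (hBnd : B.Nondegenerate)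
    (hBsymm : ∀ x y : g, B x y = B y x)
    (hBinv : ∀ x y z : g, B ⁅x, y⁆ z = B x ⁅y, z⁆)
    {ι : Type*} [Fintype ι] [DecidableEq ι] (b : Module.Basis ι ℂ g) (b' : ι → g)
    (hdual : ∀ i j, B (b i) (b' j) = if i = j then 1 else 0)
    (p : ℕ) (hp : 1 ≤ p) (κ h : ℂ) (hκ : κ + h ≠ 0)
    {n : ℕ} {A : Type*} [Ring A] [Algebra ℂ A]
    (emb : Fin (n + 1) → (UEnvp p g →ₐ[ℂ] A))
    (hcomm : ∀ i j : Fin (n + 1), i ≠ j → ∀ u v : UEnvp p g,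
      emb i u * emb j v = emb j v * emb i u) :
    (∀ t : Fin n → ℂ, Function.Injective t → ∀ i j : Fin n, i ≠ j →
      ∀ ψ : A →ₗ[ℂ] ℂ,
        deriv (fun s => ψ (HamPrime p (⇑b) b' emb κ h j (Function.update t i s))) (t i)
          = deriv (fun s => ψ (HamPrime p (⇑b) b' emb κ h i (Function.update t j s)))
              (t j)) ∧
    (∀ t : Fin n → ℂ, Function.Injective t → ∀ i j : Fin n, i ≠ j →
      ∀ ψ : A →ₗ[ℂ] ℂ,
        deriv (fun s => ψ (HamInfty p (⇑b) b' emb κ h j (Function.update t i s))) (t i)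
          = 0) ∧
    ((∀ t : Fin n → ℂ, Function.Injective t → ∀ i j : Fin n, i ≠ j →
        ∀ ψ : A →ₗ[ℂ] ℂ,
          deriv (fun s => ψ (HamTot p (⇑b) b' emb κ h j (Function.update t i s))) (t i)
            - deriv (fun s => ψ (HamTot p (⇑b) b' emb κ h i (Function.update t j s)))
                (t j)
            - ψ (HamTot p (⇑b) b' emb κ h i t * HamTot p (⇑b) b' emb κ h j t
                - HamTot p (⇑b) b' emb κ h j t * HamTot p (⇑b) b' emb κ h i t) = 0)
      ↔ (∀ t : Fin n → ℂ, Function.Injective t → ∀ i j : Fin n,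
          HamTot p (⇑b) b' emb κ h i t * HamTot p (⇑b) b' emb κ h j t
            = HamTot p (⇑b) b' emb κ h j t * HamTot p (⇑b) b' emb κ h i t)) :=
  universal_hamiltonians_flatness_iff_commutativity_general B hBsymm b b' hdual p κ h emb hcomm
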